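/- Let H, I₂ : ℝ⁴ → ℝ be defined on phase space coordinates (x, y, p_x, p_y) by H = (1/2)(p_x² − p_y²) + (1/2)(x² − y²) + x y and I₂ = −p_x p_y − (1/2)(x² − y²) + x y. Then the canonical Poisson bracket {H, I₂} = (∂H/∂x)(∂I₂/∂p_x) − (∂H/∂p_x)(∂I₂/∂x) + (∂H/∂y)(∂I₂/∂p_y) − (∂H/∂p_y)(∂I₂/∂y) vanishes identically on ℝ⁴. -/

import Mathlib

/-- The Kapitza Hamiltonian H = (1/2)(p_x² − p_y²) + (1/2)(x² − y²) + xy. -/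
noncomputable def kapitzaH (x y px py : ℝ) : ℝ :=
  (1 / 2) * (px ^ 2 - py ^ 2) + (1 / 2) * (x ^ 2 - y ^ 2) + x * y

/-- The second integral I₂ = −p_x p_y − (1/2)(x² − y²) + xy. -/
noncomputable def kapitzaI2 (x y px py : ℝ) : ℝ :=
  -(px * py) - (1 / 2) * (x ^ 2 - y ^ 2) + x * y

section PartialDerivatives

variable (x y px py : ℝ)

theorem deriv_kapitzaH_x : deriv (fun u => kapitzaH u y px py) x = x + y := by
  simp (disch := fun_prop) [kapitzaH]; ring

theorem deriv_kapitzaH_y : deriv (fun u => kapitzaH x u px py) y = x - y := by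
  simp (disch := fun_prop) [kapitzaH]; ring

theorem deriv_kapitzaH_px : deriv (fun u => kapitzaH x y u py) px = px := by
  simp (disch := fun_prop) [kapitzaH]; ring

theorem deriv_kapitzaH_py : deriv (fun u => kapitzaH x y px u) py = -py := by
  simp (disch := fun_prop) [kapitzaH]; ring

theorem deriv_kapitzaI2_x : deriv (fun u => kapitzaI2 u y px py) x = y - x := by
  simp (disch := fun_prop) [kapitzaI2]; ring

theorem deriv_kapitzaI2_y : deriv (fun u => kapitzaI2 x u px py) y = x + y := by
  simp (disch := fun_prop) [kapitzaI2]; ring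

theorem deriv_kapitzaI2_px : deriv (fun u => kapitzaI2 x y u py) px = -py := by
  simp (disch := fun_prop) [kapitzaI2]

theorem deriv_kapitzaI2_py : deriv (fun u => kapitzaI2 x y px u) py = -px := by
  simp (disch := fun_prop) [kapitzaI2]

end PartialDerivatives

/-- The canonical Poisson bracket {H, I₂} vanishes identically on ℝ⁴. -/
theorem kapitza_poisson_bracket_vanishes :
    ∀ x y px py : ℝ,
      deriv (fun u => kapitzaH u y px py) x * deriv (fun u => kapitzaI2 x y u py) px
      - deriv (fun u => kapitzaH x y u py) px * deriv (fun u => kapitzaI2 u y px py) x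
      + deriv (fun u => kapitzaH x u px py) y * deriv (fun u => kapitzaI2 x y px u) py
      - deriv (fun u => kapitzaH x y px u) py * deriv (fun u => kapitzaI2 x u px py) y
      = 0 := by
  intro x y px py
  rw [deriv_kapitzaH_x, deriv_kapitzaH_y, deriv_kapitzaH_px, deriv_kapitzaH_py,
    deriv_kapitzaI2_x, deriv_kapitzaI2_y, deriv_kapitzaI2_px, deriv_kapitzaI2_py]
  ring
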